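/- arXiv:1402.5887 — 6 statements merged into one kernel-verified Lean document; each statement's English description precedes it below -/
import Mathlib

section
/- Let n ≥ 10 and α ≥ 5 be integers with 2α ≥ n−1 and α ≤ n−3, set f(x) = x⁴ − (α+3)x² − 4x + (2α−n+1) and f₁(x) = x⁸ − (α+5)x⁶ − 4x⁵ − (n−6α)x⁴ + 4x³ + (4n−9α−5)x² − 2x − (n−2α−1). If ρ > 2 is a real root of f₁, then f(ρ) < 0. -/
/-!
Writing `g(x) = (α-4)x³ - 2x² + (n-2α)x + 1`, one has the polynomial identity
`f₁(x) - (x²-1)² f(x) = 2x g(x)` (with constant term 2 in `g` it would fail).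
At a root `ρ > 2` of `f₁` this gives `(ρ²-1)² f(ρ) = -2ρ g(ρ)`, and `g(ρ) > 0` follows from
`g(ρ) > (2α-10)ρ² + (n-2α)ρ + 1 ≥ (n+2α-20)ρ + 1 > 0`.
-/

namespace MnAlpha

section CommRing

variable {R : Type*} [CommRing R]

def f (n α x : R) : R :=
  x^4 - (α + 3)*x^2 - 4*x + (2*α - n + 1)

def f₁ (n α x : R) : R :=
  x^8 - (α + 5)*x^6 - 4*x^5 - (n - 6*α)*x^4 + 4*x^3
    + (4*n - 9*α - 5)*x^2 - 2*x - (n - 2*α - 1)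

def g (n α x : R) : R :=
  (α - 4)*x^3 - 2*x^2 + (n - 2*α)*x + 1

theorem f₁_sub_sq_mul_f (n α x : R) : f₁ n α x - (x^2 - 1)^2 * f n α x = 2 * x * g n α x := by
  unfold f₁ f g
  ring

end CommRing

section OrderedField

variable {K : Type*} [Field K] [LinearOrder K] [IsStrictOrderedRing K] {n α ρ : K}

theorem g_pos (hn : 10 ≤ n) (hα : 5 ≤ α) (hρ : 2 < ρ) : 0 < g n α ρ := by
  have hρ₀ : 0 < ρ := by linarith
  have hρ₂ : 0 < ρ - 2 := sub_pos.2 hρ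
  calc 0 < (n + 2*α - 20)*ρ + 1 := by nlinarith
    _ ≤ (2*α - 10)*ρ^2 + (n - 2*α)*ρ + 1 := by
      nlinarith [mul_nonneg (by linarith : (0 : K) ≤ 2*α - 10) (mul_pos hρ₀ hρ₂).le]
    _ < g n α ρ := by
      unfold g
      nlinarith [mul_pos (mul_pos (by linarith : (0 : K) < α - 4) (pow_pos hρ₀ 2)) hρ₂]

theorem f_neg_of_f₁_eq_zero (hn : 10 ≤ n) (hα : 5 ≤ α) (hρ : 2 < ρ) (hroot : f₁ n α ρ = 0) :
    f n α ρ < 0 := by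
  have hsq : 0 < (ρ^2 - 1)^2 := by
    have : 1 < ρ^2 := by nlinarith
    positivity
  have hprod : (ρ^2 - 1)^2 * f n α ρ = -(2 * ρ * g n α ρ) := by
    linear_combination hroot - f₁_sub_sq_mul_f n α ρ
  have hpos : 0 < 2 * ρ * g n α ρ := mul_pos (by linarith) (g_pos hn hα hρ)
  exact neg_of_mul_neg_right (by linarith) hsq.le

end OrderedField

end MnAlpha

theorem f_neg_at_root_of_f1_general (n α : ℤ) (hn : 10 ≤ n) (hα : 5 ≤ α)
    (ρ : ℝ) (hρ : 2 < ρ)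
    (hroot : ρ^8 - ((α : ℝ) + 5)*ρ^6 - 4*ρ^5 - ((n : ℝ) - 6*(α : ℝ))*ρ^4 + 4*ρ^3
        + (4*(n : ℝ) - 9*(α : ℝ) - 5)*ρ^2 - 2*ρ - ((n : ℝ) - 2*(α : ℝ) - 1) = 0) :
    ρ^4 - ((α : ℝ) + 3)*ρ^2 - 4*ρ + (2*(α : ℝ) - (n : ℝ) + 1) < 0 :=
  MnAlpha.f_neg_of_f₁_eq_zero (by exact_mod_cast hn) (by exact_mod_cast hα) hρ hroot

/-- If `ρ > 2` is a root of `f₁`, then `f(ρ) < 0`. -/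
theorem f_neg_at_root_of_f1 (n α : ℤ) (hn : 10 ≤ n) (hα : 5 ≤ α)
    (h1 : n - 1 ≤ 2 * α) (h2 : α ≤ n - 3) (ρ : ℝ) (hρ : 2 < ρ)
    (hroot : ρ^8 - ((α : ℝ) + 5)*ρ^6 - 4*ρ^5 - ((n : ℝ) - 6*(α : ℝ))*ρ^4 + 4*ρ^3
        + (4*(n : ℝ) - 9*(α : ℝ) - 5)*ρ^2 - 2*ρ - ((n : ℝ) - 2*(α : ℝ) - 1) = 0) :
    ρ^4 - ((α : ℝ) + 3)*ρ^2 - 4*ρ + (2*(α : ℝ) - (n : ℝ) + 1) < 0 :=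
  f_neg_at_root_of_f1_general n α hn hα ρ hρ hroot
end

section
/- Let n ≥ 10 and α ≥ 5 be integers with 2α ≥ n−1 and α ≤ n−3, set f(x) = x⁴ − (α+3)x² − 4x + (2α−n+1) and f₂(x) = x⁶ − x⁵ − (α+3)x⁴ + (α−2)x³ − (n−3α−5)x² + (n−2α+1)x − (n−2α−1). If ρ is a real number with ρ > 2, ρ² > α+1, and f₂(ρ) = 0, then f(ρ) < 0. -/
/-!
Multiplying `f₂` by `x² + x - 1` and subtracting `(x² - 1)² f` leaves the quartic
`(α - 2)x⁴ + (2α - n + 1)(x² + 2x - 2) + x² + 2x`, which is positive for `x > 1` when `α ≥ 2` and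
`2α - n + 1 ≥ 0`. At a root `ρ > 1` of `f₂` this forces `(ρ² - 1)² f(ρ) < 0`.
-/

namespace SpectralRadiusComparison

def f (α n x : ℝ) : ℝ :=
  x^4 - (α + 3)*x^2 - 4*x + (2*α - n + 1)

def f₂ (α n x : ℝ) : ℝ :=
  x^6 - x^5 - (α + 3)*x^4 + (α - 2)*x^3 - (n - 3*α - 5)*x^2 + (n - 2*α + 1)*x - (n - 2*α - 1)

theorem mul_f₂_sub_mul_f (α n x : ℝ) :
    (x^2 + x - 1) * f₂ α n x - (x^2 - 1)^2 * f α n x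
      = (α - 2)*x^4 + (2*α - n + 1)*(x^2 + 2*x - 2) + x^2 + 2*x := by
  unfold f f₂; ring

theorem f_neg_of_f₂_eq_zero {α n x : ℝ} (hα : 2 ≤ α) (hn : n ≤ 2*α + 1) (hx : 1 < x)
    (hroot : f₂ α n x = 0) : f α n x < 0 := by
  have hrem : 0 < (α - 2)*x^4 + (2*α - n + 1)*(x^2 + 2*x - 2) + x^2 + 2*x := by
    have : 0 ≤ (2*α - n + 1)*(x^2 + 2*x - 2) := mul_nonneg (by linarith) (by nlinarith)
    have : 0 ≤ (α - 2)*x^4 := mul_nonneg (by linarith) (by positivity)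
    nlinarith
  have hsq : 0 < (x^2 - 1)^2 := by
    have : 1 < x^2 := by nlinarith
    positivity
  have hprod : (x^2 - 1)^2 * f α n x < 0 := by
    have key := mul_f₂_sub_mul_f α n x
    rw [hroot, mul_zero, zero_sub] at key
    linarith
  exact neg_of_mul_neg_right hprod hsq.le

end SpectralRadiusComparison

theorem f_neg_at_root_of_f2_general (n α : ℤ) (hα : 5 ≤ α)
    (h1 : n - 1 ≤ 2 * α) (ρ : ℝ) (hρ : 2 < ρ)
    (hroot : ρ^6 - ρ^5 - ((α : ℝ) + 3)*ρ^4 + ((α : ℝ) - 2)*ρ^3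
        - ((n : ℝ) - 3*(α : ℝ) - 5)*ρ^2 + ((n : ℝ) - 2*(α : ℝ) + 1)*ρ - ((n : ℝ) - 2*(α : ℝ) - 1) = 0) :
    ρ^4 - ((α : ℝ) + 3)*ρ^2 - 4*ρ + (2*(α : ℝ) - (n : ℝ) + 1) < 0 := by
  have hα' : (2 : ℝ) ≤ α := by exact_mod_cast hα.trans' (by norm_num)
  have hn : (n : ℝ) ≤ 2*α + 1 := by exact_mod_cast (by omega : n ≤ 2*α + 1)
  exact SpectralRadiusComparison.f_neg_of_f₂_eq_zero hα' hn (by linarith) hroot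

/-- If `ρ > 2`, `ρ² > α+1` and `f₂(ρ) = 0`, then `f(ρ) < 0`. -/
theorem f_neg_at_root_of_f2 (n α : ℤ) (hn : 10 ≤ n) (hα : 5 ≤ α)
    (h1 : n - 1 ≤ 2 * α) (h2 : α ≤ n - 3) (ρ : ℝ) (hρ : 2 < ρ) (hρ2 : (α : ℝ) + 1 < ρ^2)
    (hroot : ρ^6 - ρ^5 - ((α : ℝ) + 3)*ρ^4 + ((α : ℝ) - 2)*ρ^3
        - ((n : ℝ) - 3*(α : ℝ) - 5)*ρ^2 + ((n : ℝ) - 2*(α : ℝ) + 1)*ρ - ((n : ℝ) - 2*(α : ℝ) - 1) = 0) :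
    ρ^4 - ((α : ℝ) + 3)*ρ^2 - 4*ρ + (2*(α : ℝ) - (n : ℝ) + 1) < 0 :=
  f_neg_at_root_of_f2_general n α hα h1 ρ hρ hroot
end

section
/- Let n ≥ 10 and α ≥ 5 be integers with 2α ≥ n−1 and α ≤ n−3, set f(x) = x⁴ − (α+3)x² − 4x + (2α−n+1) and f₃(x) = x⁸ − (α+5)x⁶ − 4x⁵ − (n−5α−4)x⁴ + 6x³ + (3n−7α−4)x² − 2x − (n−2α−1). If ρ is a real number with ρ > 2, ρ² > α+1, and f₃(ρ) = 0, then f(ρ) < 0. -/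
/-!
The identity `f₃(x) - (x² - 1)² f(x) = x g(x)` with `g(x) = (α-4)x³ - 2x² + (n-2α+1)x + 2`
reduces the claim to `g(ρ) > 0`, and
`g(x) = (x² - 1)((α-4)x - 2) + (n - α - 3)x` is positive for `x > 2`, `α ≥ 5`, `n ≥ α + 3`.
-/

section RootSign

variable {R : Type*} [CommRing R]

def polyF (a m x : R) : R :=
  x^4 - (a + 3)*x^2 - 4*x + (2*a - m + 1)

def polyF₃ (a m x : R) : R :=
  x^8 - (a + 5)*x^6 - 4*x^5 - (m - 5*a - 4)*x^4 + 6*x^3 + (3*m - 7*a - 4)*x^2 - 2*x - (m - 2*a - 1)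

def polyG (a m x : R) : R :=
  (a - 4)*x^3 - 2*x^2 + (m - 2*a + 1)*x + 2

theorem polyF₃_sub_sq_mul_polyF (a m x : R) :
    polyF₃ a m x - (x^2 - 1)^2 * polyF a m x = x * polyG a m x := by
  unfold polyF₃ polyF polyG
  ring

theorem polyG_eq (a m x : R) :
    polyG a m x = (x^2 - 1) * ((a - 4)*x - 2) + (m - a - 3) * x := by
  unfold polyG
  ring

end RootSign

theorem polyG_pos {a m x : ℝ} (ha : 5 ≤ a) (hm : a + 3 ≤ m) (hx : 2 < x) :
    0 < polyG a m x := by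
  rw [polyG_eq]
  have hsq : 0 < x^2 - 1 := by nlinarith
  have hlin : 0 < (a - 4)*x - 2 := by nlinarith
  exact add_pos_of_pos_of_nonneg (mul_pos hsq hlin) (mul_nonneg (by linarith) (by linarith))

theorem polyF_neg_of_polyF₃_eq_zero {a m x : ℝ} (h : polyF₃ a m x = 0) (hx : 0 < x)
    (hg : 0 < polyG a m x) : polyF a m x < 0 := by
  have hprod : (x^2 - 1)^2 * polyF a m x < 0 := by
    have := polyF₃_sub_sq_mul_polyF a m x
    rw [h] at this
    nlinarith [mul_pos hx hg]
  by_contra! hf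
  exact hprod.not_ge (mul_nonneg (sq_nonneg _) hf)

theorem f_neg_at_root_of_f3_general (n α : ℤ) (hα : 5 ≤ α)
    (h2 : α ≤ n - 3) (ρ : ℝ) (hρ : 2 < ρ)
    (hroot : ρ^8 - ((α : ℝ) + 5)*ρ^6 - 4*ρ^5 - ((n : ℝ) - 5*(α : ℝ) - 4)*ρ^4 + 6*ρ^3
        + (3*(n : ℝ) - 7*(α : ℝ) - 4)*ρ^2 - 2*ρ - ((n : ℝ) - 2*(α : ℝ) - 1) = 0) :
    ρ^4 - ((α : ℝ) + 3)*ρ^2 - 4*ρ + (2*(α : ℝ) - (n : ℝ) + 1) < 0 := by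
  have hα' : (5 : ℝ) ≤ α := by exact_mod_cast hα
  have hn : (α : ℝ) + 3 ≤ n := by exact_mod_cast (by omega : α + 3 ≤ n)
  exact polyF_neg_of_polyF₃_eq_zero hroot (by linarith) (polyG_pos hα' hn hρ)

/-- If `ρ > 2`, `ρ² > α+1` and `f₃(ρ) = 0`, then `f(ρ) < 0`. -/
theorem f_neg_at_root_of_f3 (n α : ℤ) (hn : 10 ≤ n) (hα : 5 ≤ α)
    (h1 : n - 1 ≤ 2 * α) (h2 : α ≤ n - 3) (ρ : ℝ) (hρ : 2 < ρ) (hρ2 : (α : ℝ) + 1 < ρ^2)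
    (hroot : ρ^8 - ((α : ℝ) + 5)*ρ^6 - 4*ρ^5 - ((n : ℝ) - 5*(α : ℝ) - 4)*ρ^4 + 6*ρ^3
        + (3*(n : ℝ) - 7*(α : ℝ) - 4)*ρ^2 - 2*ρ - ((n : ℝ) - 2*(α : ℝ) - 1) = 0) :
    ρ^4 - ((α : ℝ) + 3)*ρ^2 - 4*ρ + (2*(α : ℝ) - (n : ℝ) + 1) < 0 :=
  f_neg_at_root_of_f3_general n α hα h2 ρ hρ hroot
end

section
/- Let n ≥ 10 and α be integers with (n−1)/2 ≤ α ≤ n−3, and set f(x) = x⁴ − (α+3)x² − 4x + (2α−n+1). Then f has a real root ρ with ρ > 2, f is strictly positive on (ρ, ∞), and ρ is the unique root of f in (2, ∞); moreover ρ² > α+1. -/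
open Set

/-!
Write `f = quartic A c` with `A = α + 3` and `c = 2α - n + 1`, so that `0 ≤ c ≤ A - 5`. Everything
rests on one algebraic fact: if `x ≥ 2` and `f x ≥ 0`, then `f y > f x` for every `y > x`, because
`f y - f x = (y - x)((x + y)(x² + y² - A) - 4)` and `f x ≥ 0` forces `2x² - A ≥ 1`. Hence a root
`ρ > 2`, which exists by the intermediate value theorem since `f 2 < 0 < f A`, is followed only by
positive values and is the only root in `(2, ∞)`. Finally `ρ² ≤ A - 2` is impossible: `t(t - A)` is
at most `4 - 2A` for `t ∈ [4, A - 2]`, which would make `f ρ < 0`.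
-/

def quartic (A c x : ℝ) : ℝ := x ^ 4 - A * x ^ 2 - 4 * x + c

section

variable {A c : ℝ}

theorem continuous_quartic : Continuous (quartic A c) := by
  unfold quartic
  fun_prop

theorem quartic_two_neg (hc0 : 0 ≤ c) (hc : c ≤ A - 5) : quartic A c 2 < 0 := by
  unfold quartic
  linarith

theorem quartic_self_pos (hc0 : 0 ≤ c) (hc : c ≤ A - 5) : 0 < quartic A c A := by
  have hA : 5 ≤ A := by linarith
  unfold quartic
  nlinarith [mul_nonneg (mul_nonneg (by linarith : (0 : ℝ) ≤ A) (by linarith : (0 : ℝ) ≤ A))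
    (by linarith : (0 : ℝ) ≤ A - 2)]

theorem exists_quartic_eq_zero_mem_Ioo (hc0 : 0 ≤ c) (hc : c ≤ A - 5) :
    ∃ ρ ∈ Ioo 2 A, quartic A c ρ = 0 :=
  intermediate_value_Ioo (by linarith) continuous_quartic.continuousOn
    ⟨quartic_two_neg hc0 hc, quartic_self_pos hc0 hc⟩

theorem quartic_lt_of_nonneg {x y : ℝ} (hc : c ≤ A - 5) (hx : 2 ≤ x) (hxy : x < y)
    (hfx : 0 ≤ quartic A c x) : quartic A c x < quartic A c y := by
  have hA : A * (x ^ 2 - 1) ≤ x ^ 4 - 4 * x - 5 := by unfold quartic at hfx; linarith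
  have h2x : 1 ≤ 2 * x ^ 2 - A := by
    refine le_of_mul_le_mul_left ?_ (by nlinarith : 0 < x ^ 2 - 1)
    nlinarith [mul_nonneg (sub_nonneg.2 hx) (sub_nonneg.2 hx)]
  have hQ : 4 < (x + y) * (x ^ 2 + y ^ 2 - A) := by
    have hsq : x ^ 2 < y ^ 2 := by nlinarith
    nlinarith
  have hdiff : quartic A c y - quartic A c x =
      (y - x) * ((x + y) * (x ^ 2 + y ^ 2 - A) - 4) := by
    unfold quartic; ring
  linarith [mul_pos (sub_pos.2 hxy) (sub_pos.2 hQ)]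

theorem eq_of_quartic_eq_zero {x y : ℝ} (hc : c ≤ A - 5) (hx : 2 ≤ x) (hy : 2 ≤ y)
    (hfx : quartic A c x = 0) (hfy : quartic A c y = 0) : x = y := by
  rcases lt_trichotomy x y with hxy | rfl | hyx
  · linarith [quartic_lt_of_nonneg hc hx hxy hfx.ge]
  · rfl
  · linarith [quartic_lt_of_nonneg hc hy hyx hfy.ge]

theorem sub_two_lt_sq_of_quartic_eq_zero {ρ : ℝ} (hc : c ≤ A - 5) (hρ : 2 < ρ)
    (hfρ : quartic A c ρ = 0) : A - 2 < ρ ^ 2 := by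
  by_contra! hle
  have h4 : 4 < ρ ^ 2 := by nlinarith
  have hpar : ρ ^ 2 * (ρ ^ 2 - A) ≤ 4 - 2 * A := by
    nlinarith [mul_nonneg (sub_nonneg.2 h4.le) (sub_nonneg.2 hle)]
  unfold quartic at hfρ
  nlinarith

end

theorem extremal_quartic_root_general (n α : ℤ) (h1 : n - 1 ≤ 2 * α) (h2 : α ≤ n - 3) :
    ∃ ρ : ℝ, 2 < ρ ∧
      ρ^4 - ((α : ℝ) + 3)*ρ^2 - 4*ρ + (2*(α : ℝ) - (n : ℝ) + 1) = 0 ∧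
      (∀ x : ℝ, ρ < x → 0 < x^4 - ((α : ℝ) + 3)*x^2 - 4*x + (2*(α : ℝ) - (n : ℝ) + 1)) ∧
      (∀ x : ℝ, 2 < x → x^4 - ((α : ℝ) + 3)*x^2 - 4*x + (2*(α : ℝ) - (n : ℝ) + 1) = 0 → x = ρ) ∧
      (α : ℝ) + 1 < ρ^2 := by
  have hc0 : (0 : ℝ) ≤ 2 * α - n + 1 := by
    have : (n - 1 : ℝ) ≤ 2 * α := by exact_mod_cast h1
    linarith
  have hc : (2 * α - n + 1 : ℝ) ≤ (α + 3) - 5 := by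
    have : (α : ℝ) ≤ n - 3 := by exact_mod_cast h2
    linarith
  obtain ⟨ρ, ⟨hρ2, -⟩, hfρ⟩ := exists_quartic_eq_zero_mem_Ioo hc0 hc
  refine ⟨ρ, hρ2, hfρ, fun x hx => ?_, fun x hx hfx => ?_, ?_⟩
  · exact hfρ ▸ quartic_lt_of_nonneg hc hρ2.le hx hfρ.ge
  · exact eq_of_quartic_eq_zero hc hx.le hρ2.le hfx hfρ
  · linarith [sub_two_lt_sq_of_quartic_eq_zero hc hρ2 hfρ]

/-- The quartic `f(x) = x⁴ − (α+3)x² − 4x + (2α−n+1)` has a real root `ρ > 2`,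
`f` is strictly positive on `(ρ, ∞)`, `ρ` is the unique root of `f` in `(2, ∞)`,
and `ρ² > α + 1`. -/
theorem extremal_quartic_root (n α : ℤ) (hn : 10 ≤ n) (h1 : n - 1 ≤ 2 * α) (h2 : α ≤ n - 3) :
    ∃ ρ : ℝ, 2 < ρ ∧
      ρ^4 - ((α : ℝ) + 3)*ρ^2 - 4*ρ + (2*(α : ℝ) - (n : ℝ) + 1) = 0 ∧
      (∀ x : ℝ, ρ < x → 0 < x^4 - ((α : ℝ) + 3)*x^2 - 4*x + (2*(α : ℝ) - (n : ℝ) + 1)) ∧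
      (∀ x : ℝ, 2 < x → x^4 - ((α : ℝ) + 3)*x^2 - 4*x + (2*(α : ℝ) - (n : ℝ) + 1) = 0 → x = ρ) ∧
      (α : ℝ) + 1 < ρ^2 :=
  extremal_quartic_root_general n α h1 h2
end

section
/- Let G be a connected bicyclic graph on n vertices whose base is an ∞-graph B(p,ℓ,q) with ℓ ≥ 2 and both cycle lengths p, q odd, and suppose the graph G − V_c(G) obtained by deleting all cycle vertices has a perfect matching. Then α(G) = (n−2)/2. -/
open SimpleGraph

/-- The independence number: the largest size of a set of pairwise nonadjacent vertices. -/
noncomputable def indepNum {V : Type*} [Fintype V] (G : SimpleGraph V) : ℕ :=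
  sSup {k | ∃ s : Finset V, (∀ u ∈ s, ∀ v ∈ s, ¬ G.Adj u v) ∧ s.card = k}

/-- The set of vertices lying on some cycle of `G`. -/
def cycleVerts {V : Type*} (G : SimpleGraph V) : Set V :=
  {v | ∃ c : G.Walk v v, c.IsCycle}

/-!
An independent set meets each odd cycle `C` in at most `(|C| - 1) / 2` vertices (its vertices
are the first endpoints of at most half the darts of the cycle) and meets the rest of the graph,
which has a perfect matching, in at most half of its vertices; hence `2α + 2 ≤ n`.
Conversely, a spanning tree is properly 2-coloured, and deleting one endpoint of each of the two
edges outside the tree leaves two independent colour classes of total size at least `n - 2`.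
-/

open Finset

namespace SimpleGraph

variable {V : Type*} {G : SimpleGraph V}

theorem isIndepSet_coe_iff {s : Finset V} :
    G.IsIndepSet ↑s ↔ ∀ u ∈ s, ∀ v ∈ s, ¬ G.Adj u v :=
  ⟨fun hs _ hu _ hv huv => hs hu hv (G.ne_of_adj huv) huv,
    fun hs _ hu _ hv _ => hs _ hu _ hv⟩

theorem _root_.indepNum_eq_simpleGraph_indepNum [Fintype V] : _root_.indepNum G = G.indepNum := by
  simp only [_root_.indepNum, SimpleGraph.indepNum, isNIndepSet_iff, isIndepSet_coe_iff]

theorem Walk.two_mul_countP_support_tail_le_length [DecidableEq V] {u : V} (c : G.Walk u u)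
    {s : Finset V} (hs : G.IsIndepSet ↑s) :
    2 * c.support.tail.countP (· ∈ s) ≤ c.length := by
  have hsnd : c.darts.countP (·.snd ∈ s) = c.support.tail.countP (· ∈ s) := by
    rw [← c.map_snd_darts, List.countP_map]; rfl
  -- on a closed walk the first endpoints of the darts are a rotation of the second ones
  have hfst : c.darts.countP (·.fst ∈ s) = c.darts.countP (·.snd ∈ s) := by
    have h := congrArg (List.countP (· ∈ s))
      (c.map_fst_darts_append.trans c.cons_map_snd_darts.symm)
    simp only [List.countP_append, List.countP_cons, List.countP_nil, List.countP_map,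
      Function.comp_def] at h
    omega
  have hsnd_le : c.darts.countP (·.snd ∈ s) ≤ c.darts.countP (fun d => ¬ d.fst ∈ s) :=
    List.countP_mono_left fun d _ hd => by
      simpa using fun hmem => hs hmem (by simpa using hd) (G.ne_of_adj d.adj) d.adj
  have hlen := List.length_eq_countP_add_countP (·.fst ∈ s) (l := c.darts)
  rw [c.length_darts] at hlen
  simp only [decide_eq_true_eq] at hlen hsnd_le
  omega

theorem Walk.toFinset_support_eq_toFinset_tail [DecidableEq V] {u : V} {c : G.Walk u u}
    (hc : ¬ c.Nil) : c.support.toFinset = c.support.tail.toFinset := by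
  ext v
  rw [List.mem_toFinset, List.mem_toFinset, ← c.cons_tail_support,
    List.tail_cons, List.mem_cons, or_iff_right_iff_imp]
  rintro rfl
  exact c.end_mem_tail_support hc

theorem Walk.IsCycle.card_toFinset_support [DecidableEq V] {u : V} {c : G.Walk u u}
    (hc : c.IsCycle) : #c.support.toFinset = c.length := by
  rw [c.toFinset_support_eq_toFinset_tail hc.not_nil, List.toFinset_card_of_nodup
    hc.support_nodup, List.length_tail, c.length_support, Nat.add_sub_cancel]

theorem Walk.IsCycle.two_mul_card_inter_support_lt [DecidableEq V] {u : V} {c : G.Walk u u}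
    (hc : c.IsCycle) (hodd : Odd c.length) {s : Finset V} (hs : G.IsIndepSet ↑s) :
    2 * #(s ∩ c.support.toFinset) < c.length := by
  have hcount : #(s ∩ c.support.toFinset) = c.support.tail.countP (· ∈ s) := by
    rw [c.toFinset_support_eq_toFinset_tail hc.not_nil, List.countP_eq_length_filter,
      ← List.toFinset_card_of_nodup (hc.support_nodup.filter _), List.toFinset_filter,
      inter_comm]
    simp [Finset.filter_mem_eq_inter]
  have hle := c.two_mul_countP_support_tail_le_length hs
  obtain ⟨k, hk⟩ := hodd
  omega

theorem IsIndepSet.two_mul_card_le_of_injective [Fintype V] {s : Finset V}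
    (hs : G.IsIndepSet ↑s) {f : V → V} (hf : Function.Injective f)
    (hadj : ∀ v, G.Adj v (f v)) :
    2 * #s ≤ Fintype.card V := by
  classical
  have hdisj : Disjoint s (s.image f) := by
    refine Finset.disjoint_left.2 fun _ hfv himage => ?_
    obtain ⟨v, hv, rfl⟩ := mem_image.1 himage
    exact hs (mem_coe.2 hv) (mem_coe.2 hfv) (G.ne_of_adj (hadj v)) (hadj v)
  calc 2 * #s = #(s ∪ s.image f) := by
        rw [card_union_of_disjoint hdisj, card_image_of_injective _ hf, two_mul]
    _ ≤ Fintype.card V := card_le_univ _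

theorem Subgraph.IsPerfectMatching.exists_injective_adj {M : G.Subgraph}
    (hM : M.IsPerfectMatching) :
    ∃ f : V → V, Function.Injective f ∧ ∀ v, M.Adj v (f v) := by
  choose f hf _ using isPerfectMatching_iff.mp hM
  exact ⟨f, fun v w hvw => hM.1.eq_of_adj_right (hvw ▸ hf v) (hf w), hf⟩

theorem IsIndepSet.two_mul_card_le_of_isPerfectMatching [Fintype V]
    {s : Finset V} (hs : G.IsIndepSet ↑s) {M : G.Subgraph} (hM : M.IsPerfectMatching) :
    2 * #s ≤ Fintype.card V := by
  obtain ⟨f, hf, hadj⟩ := hM.exists_injective_adj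
  exact hs.two_mul_card_le_of_injective hf fun v => M.adj_sub (hadj v)

theorem card_le_mul_indepNum_add_card [Fintype V] {ι : Type*} [Fintype ι] (C : V → ι)
    (X : Finset V) (hC : ∀ u v, G.Adj u v → u ∉ X → v ∉ X → C u ≠ C v) :
    Fintype.card V ≤ Fintype.card ι * G.indepNum + #X := by
  classical
  have hclass : ∀ i, G.IsIndepSet ↑((univ \ X).filter (C · = i)) := by
    intro i u hu v hv _ huv
    simp only [coe_filter, mem_sdiff, mem_univ, true_and, Set.mem_ofPred_eq] at hu hv
    exact hC u v huv hu.1 hv.1 (hu.2.trans hv.2.symm)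
  calc Fintype.card V = #(univ \ X) + #X := (card_sdiff_add_card_eq_card (subset_univ X)).symm
    _ = ∑ i, #((univ \ X).filter (C · = i)) + #X := by
        rw [card_eq_sum_card_fiberwise (f := C) (t := univ) fun _ _ => mem_coe.2 (mem_univ _)]
    _ ≤ Fintype.card ι * G.indepNum + #X := by
        gcongr
        exact (sum_le_card_nsmul _ _ _ fun i _ => (hclass i).card_le_indepNum).trans_eq (by simp)

theorem IsIndepSet.two_mul_card_sdiff_add_card_le [DecidableEq V] [Fintype V] {s : Finset V}
    (hs : G.IsIndepSet ↑s) {C : Finset V}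
    (hpm : ∃ M : (G.induce (↑C)ᶜ).Subgraph, M.IsPerfectMatching) :
    2 * #(s \ C) + #C ≤ Fintype.card V := by
  obtain ⟨M, hM⟩ := hpm
  have hs' : (G.induce (↑C)ᶜ).IsIndepSet ↑(s.subtype (· ∈ (↑C : Set V)ᶜ)) :=
    fun x hx y hy hxy => hs (mem_subtype.1 hx) (mem_subtype.1 hy) (Subtype.coe_injective.ne hxy)
  have hcard := hs'.two_mul_card_le_of_isPerfectMatching hM
  rw [card_subtype, Fintype.card_compl_set] at hcard
  simp only [Finset.coe_sort_coe, Fintype.card_coe, Set.mem_compl_iff, mem_coe] at hcard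
  rw [sdiff_eq_filter]
  have hC := card_le_univ C
  omega

theorem IsIndepSet.two_mul_card_add_two_le_of_odd_cycles [DecidableEq V] [Fintype V]
    {s : Finset V} (hs : G.IsIndepSet ↑s) {a b : V} {c₁ : G.Walk a a} {c₂ : G.Walk b b}
    (hc₁ : c₁.IsCycle) (hc₂ : c₂.IsCycle) (hodd₁ : Odd c₁.length)
    (hodd₂ : Odd c₂.length) (hdisj : c₁.support.Disjoint c₂.support)
    (hpm : ∃ M : (G.induce (↑(c₁.support.toFinset ∪ c₂.support.toFinset))ᶜ).Subgraph,
      M.IsPerfectMatching) :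
    2 * #s + 2 ≤ Fintype.card V := by
  set C₁ := c₁.support.toFinset
  set C₂ := c₂.support.toFinset
  have hC : Disjoint C₁ C₂ := List.disjoint_toFinset_iff_disjoint.2 hdisj
  have hsC : #(s ∩ (C₁ ∪ C₂)) = #(s ∩ C₁) + #(s ∩ C₂) := by
    rw [inter_union_distrib_left,
      card_union_of_disjoint (hC.mono inter_subset_right inter_subset_right)]
  have h₁ : 2 * #(s ∩ C₁) < c₁.length := hc₁.two_mul_card_inter_support_lt hodd₁ hs
  have h₂ : 2 * #(s ∩ C₂) < c₂.length := hc₂.two_mul_card_inter_support_lt hodd₂ hs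
  have hout := hs.two_mul_card_sdiff_add_card_le hpm
  rw [card_union_of_disjoint hC, hc₁.card_toFinset_support, hc₂.card_toFinset_support] at hout
  have hsplit := card_inter_add_card_sdiff s (C₁ ∪ C₂)
  omega

theorem Connected.two_mul_card_le_two_mul_indepNum_add [Fintype V] [DecidableRel G.Adj]
    (hG : G.Connected) :
    2 * Fintype.card V ≤ 2 * G.indepNum + #G.edgeFinset + 1 := by
  classical
  obtain ⟨T, hTG, hT⟩ := hG.exists_isTree_le
  obtain ⟨C⟩ := hT.colorable_two
  set X := (G.edgeFinset \ T.edgeFinset).image fun e => e.out.1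
  have hX : #X + #T.edgeFinset ≤ #G.edgeFinset := by
    rw [← card_sdiff_add_card_eq_card (edgeFinset_mono hTG)]
    exact Nat.add_le_add_right card_image_le _
  have hC : ∀ u v, G.Adj u v → u ∉ X → v ∉ X → C u ≠ C v := by
    intro u v huv hu hv
    by_cases he : s(u, v) ∈ T.edgeFinset
    · exact C.valid (mem_edgeFinset.1 he)
    · have hmem : (s(u, v)).out.1 ∈ X :=
        mem_image_of_mem _ (mem_sdiff.2 ⟨mem_edgeFinset.2 huv, he⟩)
      rcases Sym2.mem_iff.1 (Sym2.out_fst_mem s(u, v)) with h | h <;> rw [h] at hmem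
      exacts [(hu hmem).elim, (hv hmem).elim]
  have hcolour := card_le_mul_indepNum_add_card C X hC
  rw [Fintype.card_fin] at hcolour
  have htree := hT.card_edgeFinset
  omega

end SimpleGraph

theorem bicyclic_indepNum_eq_general {V : Type*} [Fintype V]
    (G : SimpleGraph V) [DecidableRel G.Adj]
    (hconn : G.Connected)
    (hbicyclic : G.edgeFinset.card = Fintype.card V + 1)
    (hbase : ∃ (a b : V) (c1 : G.Walk a a) (c2 : G.Walk b b),
      c1.IsCycle ∧ c2.IsCycle ∧ Odd c1.length ∧ Odd c2.length ∧
      c1.support.Disjoint c2.support ∧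
      cycleVerts G = {v | v ∈ c1.support ∨ v ∈ c2.support})
    (hpm : ∃ M : (G.induce {v | v ∉ cycleVerts G}).Subgraph, M.IsPerfectMatching) :
    2 * _root_.indepNum G + 2 = Fintype.card V := by
  classical
  obtain ⟨a, b, c₁, c₂, hc₁, hc₂, hodd₁, hodd₂, hdisj, hcyc⟩ := hbase
  have hnoncyc :
      {v | v ∉ cycleVerts G} = (↑(c₁.support.toFinset ∪ c₂.support.toFinset))ᶜ := by
    ext v
    simp [hcyc]
  obtain ⟨s, hs, hcard⟩ := G.exists_isNIndepSet_indepNum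
  have hupper :=
    hs.two_mul_card_add_two_le_of_odd_cycles hc₁ hc₂ hodd₁ hodd₂ hdisj (hnoncyc ▸ hpm)
  have hlower := hconn.two_mul_card_le_two_mul_indepNum_add
  rw [indepNum_eq_simpleGraph_indepNum]
  omega

/-- Let `G` be a connected bicyclic graph on `n` vertices whose base is an ∞-graph
`B(p,ℓ,q)` with `ℓ ≥ 2` (the two cycles are vertex-disjoint) and both cycle lengths odd,
and suppose `G − V_c(G)` has a perfect matching. Then `α(G) = (n−2)/2`. -/
theorem bicyclic_indepNum_eq {V : Type*} [Fintype V] [DecidableEq V]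
    (G : SimpleGraph V) [DecidableRel G.Adj]
    (hconn : G.Connected)
    (hbicyclic : G.edgeFinset.card = Fintype.card V + 1)
    (hbase : ∃ (a b : V) (c1 : G.Walk a a) (c2 : G.Walk b b),
      c1.IsCycle ∧ c2.IsCycle ∧ Odd c1.length ∧ Odd c2.length ∧
      c1.support.Disjoint c2.support ∧
      cycleVerts G = {v | v ∈ c1.support ∨ v ∈ c2.support})
    (hpm : ∃ M : (G.induce {v | v ∉ cycleVerts G}).Subgraph, M.IsPerfectMatching) :
    2 * _root_.indepNum G + 2 = Fintype.card V :=
  bicyclic_indepNum_eq_general G hconn hbicyclic hbase hpm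
end

section
/- Let G be a connected bicyclic graph on n vertices with independence number α and exactly α−1 pendant vertices. Let V′(G) be the set of non-pendant vertices of G having no pendant neighbour. Then 1 ≤ |V′(G)| ≤ 3. -/
/-!
If every non-pendant vertex had a pendant neighbour, sending each vertex of an independent set to
itself or to a pendant neighbour would be injective (a pendant vertex has one neighbour), forcing
`α ≤ α - 1`; so `V′(G)` is nonempty. Pendant vertices are pairwise nonadjacent, so two nonadjacent
vertices of `V′(G)` together with them would be an independent set of size `α + 1`: `V′(G)` is a
clique. A connected graph with `n + 1` edges contains no `K₄`, since deleting the three edges of a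
triangle of a `K₄` keeps it connected through the fourth vertex, with only `n - 2` edges left.
-/

open SimpleGraph

open Finset

theorem indepNum_eq_simpleGraph_indepNum_s19 {V : Type*} [Fintype V] (G : SimpleGraph V) :
    _root_.indepNum G = G.indepNum := by
  have hindep (s : Finset V) : (∀ u ∈ s, ∀ v ∈ s, ¬ G.Adj u v) ↔ G.IsIndepSet s :=
    ⟨fun h u hu v hv _ => h u hu v hv, fun h u hu v hv huv => h hu hv huv.ne huv⟩
  simp only [_root_.indepNum, SimpleGraph.indepNum, hindep]
  congr! 4 with k
  ext s
  exact ⟨fun ⟨h, hk⟩ => ⟨h, hk⟩, fun ⟨h, hk⟩ => ⟨h, hk⟩⟩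

namespace SimpleGraph

variable {V : Type*} {G H : SimpleGraph V}

theorem IsIndepSet.insert {s : Set V} {a : V} (hs : G.IsIndepSet s) (h : ∀ b ∈ s, ¬G.Adj a b) :
    G.IsIndepSet (insert a s) :=
  Set.Pairwise.insert hs fun b hb _ => ⟨h b hb, fun hba => h b hb hba.symm⟩

theorem four_le_card_of_card_lt_card_edgeFinset [Fintype V] [DecidableEq V] [DecidableRel G.Adj]
    (h : Fintype.card V < #G.edgeFinset) : 4 ≤ Fintype.card V := by
  have hE := G.card_edgeFinset_le_card_choose_two
  generalize #G.edgeFinset = m at h hE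
  by_contra! hV
  interval_cases Fintype.card V <;> simp at hE <;> omega

theorem eq_of_adj_of_degree_eq_one [Fintype V] [DecidableRel G.Adj] {v x y : V}
    (hv : G.degree v = 1) (hx : G.Adj v x) (hy : G.Adj v y) : x = y :=
  (degree_eq_one_iff_existsUnique_adj.1 hv).unique hx hy

theorem Connected.of_reachable_of_adj (hG : G.Connected)
    (h : ∀ ⦃x y⦄, G.Adj x y → H.Reachable x y) : H.Connected := by
  have := hG.nonempty
  refine ⟨fun u v => ?_⟩
  rw [reachable_iff_reflTransGen] at *
  exact Relation.ReflTransGen.lift' id (fun x y hxy => (reachable_iff_reflTransGen x y).1 (h hxy))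
    _ _ ((reachable_iff_reflTransGen u v).1 (hG.preconnected u v))

/-- Two adjacent pendant vertices would form a whole connected component. -/
theorem Connected.isIndepSet_setOf_degree_eq_one [Fintype V] [DecidableRel G.Adj]
    (hG : G.Connected) (hV : 2 < Fintype.card V) : G.IsIndepSet {v | G.degree v = 1} := by
  classical
  intro p hp q hq _ hpq
  have hclosed (r : V) (hr : Relation.ReflTransGen G.Adj p r) : r = p ∨ r = q := by
    induction hr with
    | refl => exact .inl rfl
    | tail _ hxy ih =>
      rcases ih with rfl | rfl
      · exact .inr (eq_of_adj_of_degree_eq_one hp hxy hpq)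
      · exact .inl (eq_of_adj_of_degree_eq_one hq hxy hpq.symm)
  have hsub : (univ : Finset V) ⊆ {p, q} := fun r _ => by
    simpa using hclosed r ((reachable_iff_reflTransGen p r).1 (hG.preconnected p r))
  have := (card_le_card hsub).trans card_le_two
  rw [card_univ] at this
  omega

theorem IsIndepSet.card_le_card_degree_eq_one [Fintype V] [DecidableRel G.Adj] {s : Finset V}
    (hs : G.IsIndepSet s) (h : ∀ v, G.degree v ≠ 1 → ∃ u, G.Adj v u ∧ G.degree u = 1) :
    #s ≤ #{v | G.degree v = 1} := by
  have hf (v : V) : ∃ u, G.degree u = 1 ∧ (u = v ∨ G.Adj v u) := by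
    by_cases hv : G.degree v = 1
    · exact ⟨v, hv, .inl rfl⟩
    · obtain ⟨u, hvu, hu⟩ := h v hv
      exact ⟨u, hu, .inr hvu⟩
  choose f hf1 hf2 using hf
  refine card_le_card_of_injOn f (fun v _ => by simp [hf1]) fun x hx y hy hxy => ?_
  rcases hf2 x with hx' | hx' <;> rcases hf2 y with hy' | hy'
  · rwa [hx', hy'] at hxy
  · rw [← hxy, hx'] at hy'
    by_contra hne
    exact hs hy hx (Ne.symm hne) hy'
  · rw [hxy, hy'] at hx'
    by_contra hne
    exact hs hx hy hne hx'
  · exact eq_of_adj_of_degree_eq_one (hf1 x) hx'.symm (hxy ▸ hy'.symm)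

theorem Connected.cliqueFree_four_of_card_edgeFinset_lt [Fintype V] [DecidableEq V]
    [DecidableRel G.Adj] (hG : G.Connected) (hE : #G.edgeFinset < Fintype.card V + 2) :
    G.CliqueFree 4 := by
  intro s hs
  obtain ⟨d, t, hdt, rfl, ht⟩ := card_eq_succ.1 hs.card_eq
  obtain ⟨a, b, c, hab, hac, hbc, rfl⟩ := card_eq_three.1 ht
  have hadj : ∀ x ∈ ({d, a, b, c} : Finset V), ∀ y ∈ ({d, a, b, c} : Finset V), x ≠ y →
      G.Adj x y := fun x hx y hy hxy => hs.isClique (by simpa using hx) (by simpa using hy) hxy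
  simp only [mem_insert, mem_singleton, not_or] at hdt
  set D : Set (Sym2 V) := {s(a, b), s(a, c), s(b, c)} with hD
  have hadj_d : ∀ x ∈ ({a, b, c} : Finset V), (G.deleteEdges D).Adj x d := by
    intro x hx
    simp only [mem_insert, mem_singleton] at hx
    rw [deleteEdges_adj]
    refine ⟨hadj x (by simp [hx]) d (by simp) ?_, ?_⟩
    · rintro rfl
      simp_all
    · simp only [hD, Set.mem_insert_iff, Set.mem_singleton_iff, Sym2.eq_iff]
      aesop
  have hD_mem : ∀ x y, s(x, y) ∈ D →
      x ∈ ({a, b, c} : Finset V) ∧ y ∈ ({a, b, c} : Finset V) := by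
    intro x y hxy
    simp only [hD, Set.mem_insert_iff, Set.mem_singleton_iff, Sym2.eq_iff] at hxy
    aesop
  have hH : (G.deleteEdges D).Connected := by
    refine hG.of_reachable_of_adj fun x y hxy => ?_
    by_cases hxyD : s(x, y) ∈ D
    · obtain ⟨hx, hy⟩ := hD_mem x y hxyD
      exact (hadj_d x hx).reachable.trans (hadj_d y hy).symm.reachable
    · exact Adj.reachable ((deleteEdges_adj ..).2 ⟨hxy, hxyD⟩)
  have hD3 : D.ncard = 3 := by
    rw [Set.ncard_eq_three]
    refine ⟨_, _, _, ?_, ?_, ?_, rfl⟩ <;> simp [hab, hac, hbc, hab.symm, hbc.symm]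
  have hDG : D ⊆ G.edgeSet := by
    simp only [hD, Set.insert_subset_iff, Set.singleton_subset_iff, mem_edgeSet]
    exact ⟨hadj a (by simp) b (by simp) hab, hadj a (by simp) c (by simp) hac,
      hadj b (by simp) c (by simp) hbc⟩
  have hcount := hH.card_vert_le_card_edgeSet_add_one
  rw [Nat.card_coe_set_eq, edgeSet_deleteEdges, Set.ncard_sdiff hDG, hD3,
    Nat.card_eq_fintype_card, ← coe_edgeFinset, Set.ncard_coe_finset] at hcount
  have h4 : 4 ≤ Fintype.card V := hs.card_eq ▸ card_le_univ _
  omega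

theorem one_le_indepNum [Finite V] [Nonempty V] : 1 ≤ G.indepNum := by
  classical
  simpa using (show G.IsIndepSet ({Classical.arbitrary V} : Finset V) by
    simp [isIndepSet_iff]).card_le_indepNum

theorem exists_forall_adj_degree_ne_one_of_card_lt_indepNum [Fintype V] [DecidableRel G.Adj]
    (hdeg : ∀ v, 0 < G.degree v) (h : #{v | G.degree v = 1} < G.indepNum) :
    ∃ v, 2 ≤ G.degree v ∧ ∀ u, G.Adj v u → G.degree u ≠ 1 := by
  by_contra! hno
  obtain ⟨S, hS⟩ := G.exists_isNIndepSet_indepNum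
  have hcover (v : V) (hv : G.degree v ≠ 1) : ∃ u, G.Adj v u ∧ G.degree u = 1 :=
    hno v (by have := hdeg v; omega)
  have := hS.isIndepSet.card_le_card_degree_eq_one hcover
  rw [hS.card_eq] at this
  omega

theorem isClique_of_isIndepSet_of_indepNum_lt [Fintype V] [DecidableRel G.Adj]
    (hP : G.IsIndepSet {v | G.degree v = 1}) (hα : G.indepNum < #{v | G.degree v = 1} + 2) :
    G.IsClique {v | G.degree v ≠ 1 ∧ ∀ u, G.Adj v u → G.degree u ≠ 1} := by
  classical
  rintro x ⟨hx1, hxP⟩ y ⟨hy1, hyP⟩ hxy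
  by_contra hnadj
  set P : Finset V := {v | G.degree v = 1} with hPdef
  have hind : G.IsIndepSet (insert x (insert y P) : Finset V) := by
    simp only [P, coe_insert, coe_filter, mem_univ, true_and]
    refine (hP.insert fun b hb hyb => hyP b hyb hb).insert ?_
    rintro b (rfl | hb)
    · exact hnadj
    · exact fun hxb => hxP b hxb hb
  have := hind.card_le_indepNum
  rw [card_insert_of_notMem (by simp [hxy, hPdef, hx1]),
    card_insert_of_notMem (by simpa [hPdef])] at this
  omega

end SimpleGraph

theorem card_Vprime_bounds_general {V : Type*} [Fintype V] [DecidableEq V]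
    (G : SimpleGraph V) [DecidableRel G.Adj]
    (hconn : G.Connected)
    (hbicyclic : G.edgeFinset.card = Fintype.card V + 1)
    (hpendant : (Finset.univ.filter (fun v : V => G.degree v = 1)).card = _root_.indepNum G - 1) :
    1 ≤ (Finset.univ.filter
          (fun v : V => 2 ≤ G.degree v ∧ ∀ u : V, G.Adj v u → G.degree u ≠ 1)).card ∧
        (Finset.univ.filter
          (fun v : V => 2 ≤ G.degree v ∧ ∀ u : V, G.Adj v u → G.degree u ≠ 1)).card ≤ 3 := by
  set W : Finset V := {v | 2 ≤ G.degree v ∧ ∀ u : V, G.Adj v u → G.degree u ≠ 1}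
  rw [indepNum_eq_simpleGraph_indepNum_s19] at hpendant
  have hV : 4 ≤ Fintype.card V := four_le_card_of_card_lt_card_edgeFinset (G := G) (by omega)
  have : Nontrivial V := Fintype.one_lt_card_iff_nontrivial.1 (by omega)
  have hα : 1 ≤ G.indepNum := one_le_indepNum
  constructor
  · obtain ⟨v, hv⟩ := exists_forall_adj_degree_ne_one_of_card_lt_indepNum
      (fun v => hconn.preconnected.degree_pos_of_nontrivial v) (by omega)
    exact card_pos.2 ⟨v, by simpa [W] using hv⟩
  · have hclique := isClique_of_isIndepSet_of_indepNum_lt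
      (hconn.isIndepSet_setOf_degree_eq_one (by omega)) (by omega)
    by_contra! h4
    obtain ⟨t, htW, ht⟩ := exists_subset_card_eq h4
    refine hconn.cliqueFree_four_of_card_edgeFinset_lt (by omega) t ⟨hclique.subset ?_, ht⟩
    intro v hv
    have hvW : v ∈ W := htW hv
    simp only [W, mem_filter, mem_univ, true_and] at hvW
    exact ⟨by omega, hvW.2⟩

/-- Let `G` be a connected bicyclic graph with independence number `α` and exactly
`α − 1` pendant vertices. Then the set `V′(G)` of vertices of degree at least 2
having no pendant neighbour satisfies `1 ≤ |V′(G)| ≤ 3`. -/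
theorem card_Vprime_bounds {V : Type*} [Fintype V] [DecidableEq V] [Nonempty V]
    (G : SimpleGraph V) [DecidableRel G.Adj]
    (hconn : G.Connected)
    (hbicyclic : G.edgeFinset.card = Fintype.card V + 1)
    (hpendant : (Finset.univ.filter (fun v : V => G.degree v = 1)).card = _root_.indepNum G - 1) :
    1 ≤ (Finset.univ.filter
          (fun v : V => 2 ≤ G.degree v ∧ ∀ u : V, G.Adj v u → G.degree u ≠ 1)).card ∧
        (Finset.univ.filter
          (fun v : V => 2 ≤ G.degree v ∧ ∀ u : V, G.Adj v u → G.degree u ≠ 1)).card ≤ 3 :=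
  card_Vprime_bounds_general G hconn hbicyclic hpendant
end
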